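/- Suppose ρ(A) > 0 and ρ(A) < (λ_m + λ_2)/(λ_m − λ_2), and let W = I_m − αL with α a real number satisfying α > 0 and λ_2^{-1}(1 − ρ(A)^{-1}) < α < λ_m^{-1}(1 + ρ(A)^{-1}). Then every complex eigenvalue μ of W ⊗ A satisfies: either |μ| < 1, or μ is a complex eigenvalue of A with |μ| ≥ 1. Moreover, for every complex μ with |μ| ≥ 1, the algebraic multiplicity of μ as a root of the characteristic polynomial of W ⊗ A equals the algebraic multiplicity of μ as a root of the characteristic polynomial of A. -/

import Mathlib

open Matrix Kronecker Polynomial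

/-! Orthogonally diagonalising the symmetric matrix `L` conjugates `W ⊗ A` into a block-diagonal
matrix with blocks `(1 - α λₖ) A`, so the characteristic polynomial of `W ⊗ A` is the product of
those of the blocks. The block of `λ₁ = 0` is `A` itself. For `k ≥ 2` the bounds on `α` give
`|1 - α λₖ| < ρ(A)⁻¹`, so every eigenvalue of that block has modulus `< 1` and contributes neither
to the eigenvalues of modulus `≥ 1` nor to their multiplicities. -/

theorem abs_one_sub_mul_lt_inv {α x l u r : ℝ} (hα : 0 < α) (hl : 0 < l) (hlx : l ≤ x)
    (hxu : x ≤ u) (hlo : l⁻¹ * (1 - r⁻¹) < α) (hhi : α < u⁻¹ * (1 + r⁻¹)) :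
    |1 - α * x| < r⁻¹ := by
  have hlo' : 1 - r⁻¹ < α * l := by rwa [inv_mul_lt_iff₀ hl, mul_comm] at hlo
  have hhi' : α * u < 1 + r⁻¹ := by
    rwa [lt_inv_mul_iff₀ (hl.trans_le (hlx.trans hxu)), mul_comm] at hhi
  have := mul_le_mul_of_nonneg_left hlx hα.le
  have := mul_le_mul_of_nonneg_left hxu hα.le
  rw [abs_sub_lt_iff]
  constructor <;> linarith

namespace Polynomial

theorem prod_map_eq_of_prod_X_sub_C_eq {R M ι : Type*} [CommRing R] [IsDomain R]
    [CommMonoid M] [Fintype ι] {a b : ι → R}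
    (h : ∏ k, (X - C (a k)) = ∏ k, (X - C (b k))) (f : R → M) :
    ∏ k, f (a k) = ∏ k, f (b k) := by
  have hroots (c : ι → R) : (∏ k, (X - C (c k))).roots = Finset.univ.val.map c := by
    rw [roots_prod _ _ (Finset.prod_ne_zero_iff.2 fun k _ => X_sub_C_ne_zero (c k))]
    simp [Multiset.bind_singleton]
  calc ∏ k, f (a k) = ((Finset.univ.val.map a).map f).prod := by rw [Multiset.map_map]; rfl
    _ = ((Finset.univ.val.map b).map f).prod := by rw [← hroots, h, hroots]
    _ = ∏ k, f (b k) := by rw [Multiset.map_map]; rfl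

end Polynomial

namespace Matrix

variable {ι n : Type*} [Fintype ι] [DecidableEq ι] [Fintype n]

theorem norm_le_of_smul_mulVec_eq_smul {K : Type*} [NormedField K] {A : Matrix n n K} {ρ : ℝ}
    (hρ : ∀ ν : K, (∃ v : n → K, v ≠ 0 ∧ A *ᵥ v = ν • v) → ‖ν‖ ≤ ρ) {c μ : K}
    (hμ : ∃ v : n → K, v ≠ 0 ∧ (c • A) *ᵥ v = μ • v) : ‖μ‖ ≤ ‖c‖ * ρ := by
  obtain ⟨v, hv, hAv⟩ := hμ
  rw [smul_mulVec] at hAv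
  obtain rfl | hc := eq_or_ne c 0
  · rw [zero_smul, eq_comm, smul_eq_zero_iff_left hv] at hAv
    simp [hAv]
  · have hν : A *ᵥ v = (c⁻¹ * μ) • v := by
      rw [mul_smul, ← hAv, smul_smul, inv_mul_cancel₀ hc, one_smul]
    calc ‖μ‖ = ‖c‖ * ‖c⁻¹ * μ‖ := by rw [← norm_mul, mul_inv_cancel_left₀ hc]
      _ ≤ ‖c‖ * ρ := by gcongr; exact hρ _ ⟨v, hv, hν⟩

variable [DecidableEq n]

theorem exists_mulVec_eq_smul_iff_isRoot_charpoly {K : Type*} [Field K] (M : Matrix n n K)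
    (μ : K) : (∃ v, v ≠ 0 ∧ M *ᵥ v = μ • v) ↔ M.charpoly.IsRoot μ := by
  rw [IsRoot, eval_charpoly, ← exists_mulVec_eq_zero_iff]
  refine exists_congr fun v => and_congr_right fun _ => ?_
  simp [sub_mulVec, sub_eq_zero, eq_comm]

section CommRing

variable {R : Type*} [CommRing R]

theorem charmatrix_blockDiagonal (d : ι → Matrix n n R) :
    charmatrix (blockDiagonal d) = blockDiagonal fun k => charmatrix (d k) := by
  ext ⟨i, k⟩ ⟨j, k'⟩
  obtain rfl | hk := eq_or_ne k k'
  · obtain rfl | hij := eq_or_ne i j <;> simp [*]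
  · simp [blockDiagonal_apply_ne _ _ _ hk, hk]

theorem charpoly_blockDiagonal (d : ι → Matrix n n R) :
    (blockDiagonal d).charpoly = ∏ k, (d k).charpoly := by
  rw [charpoly, charmatrix_blockDiagonal, det_blockDiagonal]
  rfl

theorem charpoly_diagonal_kronecker (d : ι → R) (A : Matrix n n R) :
    (diagonal d ⊗ₖ A).charpoly = ∏ k, (d k • A).charpoly := by
  rw [diagonal_kronecker, charpoly_reindex, charpoly_blockDiagonal]

theorem charpoly_mul_mul_kronecker {P Q : Matrix ι ι R} (hQP : Q * P = 1) (M : Matrix ι ι R)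
    (A : Matrix n n R) : ((P * M * Q) ⊗ₖ A).charpoly = (M ⊗ₖ A).charpoly := by
  have hconj : (P * M * Q) ⊗ₖ A = (P ⊗ₖ 1) * (M ⊗ₖ A) * (Q ⊗ₖ 1) := by
    rw [← mul_kronecker_mul, ← mul_kronecker_mul, mul_one, one_mul]
  rw [hconj, charpoly_mul_comm, ← mul_assoc, ← mul_kronecker_mul, hQP, one_mul,
    one_kronecker_one, one_mul]

end CommRing

theorem IsHermitian.charpoly_one_sub_smul_kronecker {𝕜 : Type*} [RCLike 𝕜] {L : Matrix ι ι 𝕜}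
    (hL : L.IsHermitian) {lam : ι → 𝕜} (hchar : L.charpoly = ∏ k, (X - C (lam k)))
    (α : 𝕜) (A : Matrix n n 𝕜) :
    ((1 - α • L) ⊗ₖ A).charpoly = ∏ k, ((1 - α * lam k) • A).charpoly := by
  set U : Matrix ι ι 𝕜 := (hL.eigenvectorUnitary : Matrix ι ι 𝕜)
  have hdiag : 1 - α • L = U * diagonal (fun k => 1 - α * hL.eigenvalues k) * star U := by
    have hD : diagonal (fun k => 1 - α * hL.eigenvalues k)
        = 1 - α • diagonal (RCLike.ofReal ∘ hL.eigenvalues) := by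
      ext i j
      obtain rfl | h := eq_or_ne i j <;> simp [*]
    have hUU : U * star U = 1 := Unitary.coe_mul_star_self _
    conv_lhs => rw [hL.spectral_theorem, Unitary.conjStarAlgAut_apply]
    rw [hD, mul_sub, sub_mul, mul_one, hUU, mul_smul_comm, smul_mul_assoc]
  rw [hdiag, charpoly_mul_mul_kronecker (Unitary.coe_star_mul_self _),
    charpoly_diagonal_kronecker]
  exact prod_map_eq_of_prod_X_sub_C_eq (hL.charpoly_eq.symm.trans hchar)
    fun x => ((1 - α * x) • A).charpoly

theorem IsHermitian.charpoly_map_ofReal_one_sub_smul_kronecker {L : Matrix ι ι ℝ}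
    (hL : L.IsHermitian) {lam : ι → ℝ} (hchar : L.charpoly = ∏ k, (X - C (lam k)))
    (α : ℝ) (A : Matrix n n ℝ) :
    (((1 - α • L) ⊗ₖ A).map Complex.ofReal).charpoly
      = ∏ k, (((1 - α * lam k : ℝ) : ℂ) • A.map Complex.ofReal).charpoly := by
  calc (((1 - α • L) ⊗ₖ A).map Complex.ofRealHom).charpoly
      = (∏ k, ((1 - α * lam k) • A).charpoly).map Complex.ofRealHom := by
        rw [charpoly_map, hL.charpoly_one_sub_smul_kronecker hchar]
    _ = ∏ k, (((1 - α * lam k) • A).map Complex.ofRealHom).charpoly := by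
        simp_rw [Polynomial.map_prod, charpoly_map]
    _ = _ := by
        congr! with k
        ext i j
        simp

end Matrix

theorem stmt1 (m n : ℕ) (hm : 2 < m)
    (G : SimpleGraph (Fin m)) [DecidableRel G.Adj]
    (L : Matrix (Fin m) (Fin m) ℝ) (hL : L = G.lapMatrix ℝ)
    -- the eigenvalues of L, listed in nondecreasing order
    (eig : Fin m → ℝ) (heig_mono : Monotone eig)
    (hchar : L.charpoly = ∏ i, (X - C (eig i)))
    (heig0 : eig ⟨0, by omega⟩ = 0) (heig1 : 0 < eig ⟨1, by omega⟩)
    (A : Matrix (Fin n) (Fin n) ℝ)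
    -- ρA is the spectral radius of A: the maximal modulus of complex eigenvalues
    (ρA : ℝ) (hρ_pos : 0 < ρA)
    (hρ_ub : ∀ μ : ℂ, (∃ v : Fin n → ℂ, v ≠ 0 ∧
        (A.map Complex.ofReal).mulVec v = μ • v) → ‖μ‖ ≤ ρA)
    (α : ℝ) (hα_pos : 0 < α)
    (hα_lo : (eig ⟨1, by omega⟩)⁻¹ * (1 - ρA⁻¹) < α)
    (hα_hi : α < (eig ⟨m - 1, by omega⟩)⁻¹ * (1 + ρA⁻¹))
    (W : Matrix (Fin m) (Fin m) ℝ) (hW : W = 1 - α • L) :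
    (∀ μ : ℂ, (∃ v : Fin m × Fin n → ℂ, v ≠ 0 ∧
        ((W ⊗ₖ A).map Complex.ofReal).mulVec v = μ • v) →
      ‖μ‖ < 1 ∨
        ((∃ v : Fin n → ℂ, v ≠ 0 ∧ (A.map Complex.ofReal).mulVec v = μ • v) ∧
          1 ≤ ‖μ‖)) ∧
    (∀ μ : ℂ, 1 ≤ ‖μ‖ →
      (((W ⊗ₖ A).map Complex.ofReal).charpoly).rootMultiplicity μ =
        ((A.map Complex.ofReal).charpoly).rootMultiplicity μ) := by
  set Ac := A.map Complex.ofReal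
  set w : Fin m → ℂ := fun k => ((1 - α * eig k : ℝ) : ℂ)
  set k₀ : Fin m := ⟨0, by omega⟩
  set q := ∏ k ∈ Finset.univ.erase k₀, (w k • Ac).charpoly
  have hLH : L.IsHermitian := hL ▸ G.isHermitian_lapMatrix ℝ
  have hfactor : ((W ⊗ₖ A).map Complex.ofReal).charpoly = Ac.charpoly * q := by
    rw [hW, hLH.charpoly_map_ofReal_one_sub_smul_kronecker hchar,
      ← Finset.mul_prod_erase _ _ (Finset.mem_univ k₀)]
    congr 1
    simp [Ac, heig0]
  have hq : ∀ μ, q.IsRoot μ → ‖μ‖ < 1 := by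
    intro μ hμ
    obtain ⟨k, hk, hroot⟩ := (isRoot_prod _ _ _).1 hμ
    have hk1 : (⟨1, by omega⟩ : Fin m) ≤ k :=
      Fin.le_def.2 (Nat.one_le_iff_ne_zero.2 (Fin.val_ne_iff.2 (Finset.ne_of_mem_erase hk)))
    have hwk : ‖w k‖ < ρA⁻¹ := by
      rw [Complex.norm_real, Real.norm_eq_abs]
      exact abs_one_sub_mul_lt_inv hα_pos heig1 (heig_mono hk1)
        (heig_mono (Fin.le_def.2 (Nat.le_sub_one_of_lt k.2))) hα_lo hα_hi
    calc ‖μ‖ ≤ ‖w k‖ * ρA := norm_le_of_smul_mulVec_eq_smul hρ_ub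
          ((exists_mulVec_eq_smul_iff_isRoot_charpoly _ _).2 hroot)
      _ < ρA⁻¹ * ρA := by gcongr
      _ = 1 := inv_mul_cancel₀ hρ_pos.ne'
  refine ⟨fun μ hμ => ?_, fun μ hμ => ?_⟩
  · rw [exists_mulVec_eq_smul_iff_isRoot_charpoly, hfactor, root_mul,
      ← exists_mulVec_eq_smul_iff_isRoot_charpoly] at hμ
    rcases hμ with hA | hqμ
    · exact (lt_or_ge ‖μ‖ 1).imp_right fun h => ⟨hA, h⟩
    · exact Or.inl (hq μ hqμ)
  · rw [hfactor, rootMultiplicity_mul (hfactor ▸ (charpoly_monic _).ne_zero),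
      rootMultiplicity_eq_zero fun h => (hq μ h).not_ge hμ, add_zero]
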